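/- arXiv:2310.03347 — 8 statements merged into one kernel-verified Lean document; each statement's English description precedes it below -/
import Mathlib

section
/- Let V: ℕ → ℝ≥0 and constants κ ∈ [0,1), c ≥ 0, M ∈ ℕ, and suppose that for all k ∈ ℕ, V(k+1) ≤ κ · max_{θ ∈ [max(0,k-M), k]} V(θ) + c. Then for all k ∈ ℕ, V(k) ≤ κ^{⌊k/(M+1)⌋} · max_{θ ∈ [0, M]} V(θ) + c/(1-κ). -/
/-!
Compare `V` with the antitone profile `f j = κ ^ j * S + c / (1 - κ)`, indexed by the number `j`
of completed windows of length `M + 1`. Since `c / (1 - κ)` is the fixed point of `x ↦ κ * x + c`,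
one step of the recursion turns `f j` into `f (j + 1)`. By strong induction `V k ≤ f (k / (M + 1))`:
the window `[k - M, k]` preceding `k + 1` lies entirely in window number `(k - M) / (M + 1)` or later,
so its maximum is at most `f ((k - M) / (M + 1))`, and `(k + 1) / (M + 1)` is one more than that index.
-/

theorem le_of_windowed_sup_recursion {α : Type*} [SemilatticeSup α] {V f : ℕ → α} {g : α → α}
    {M : ℕ} (hg : Monotone g) (hf : Antitone f) (hstep : ∀ j, g (f j) ≤ f (j + 1))
    (hbase : ∀ k ≤ M, V k ≤ f 0)
    (hrec : ∀ k : ℕ, V (k + 1) ≤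
      g ((Finset.Icc (k - M) k).sup' (Finset.nonempty_Icc.mpr (Nat.sub_le k M)) V)) :
    ∀ k, V k ≤ f (k / (M + 1)) := by
  intro k
  induction k using Nat.strong_induction_on with
  | _ k ih =>
    rcases le_or_gt k M with hk | hk
    · rw [Nat.div_eq_of_lt (Nat.lt_succ_of_le hk)]
      exact hbase k hk
    obtain ⟨m, rfl⟩ : ∃ m, k = m + 1 := ⟨k - 1, by omega⟩
    have hwindow : (Finset.Icc (m - M) m).sup' (Finset.nonempty_Icc.mpr (Nat.sub_le m M)) V
        ≤ f ((m - M) / (M + 1)) := by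
      refine Finset.sup'_le _ _ fun θ hθ => ?_
      rw [Finset.mem_Icc] at hθ
      exact (ih θ (by omega)).trans (hf (Nat.div_le_div_right hθ.1))
    have hindex : (m + 1) / (M + 1) = (m - M) / (M + 1) + 1 := by
      rw [← Nat.add_div_right _ M.succ_pos]
      congr 1
      omega
    calc V (m + 1) ≤ g (f ((m - M) / (M + 1))) := (hrec m).trans (hg hwindow)
      _ ≤ f ((m + 1) / (M + 1)) := hindex ▸ hstep _

theorem razumikhin_decay (V : ℕ → ℝ) (hVpos : ∀ k, 0 ≤ V k)
    (κ c : ℝ) (hκ0 : 0 ≤ κ) (hκ1 : κ < 1) (hc : 0 ≤ c) (M : ℕ)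
    (hrec : ∀ k : ℕ, V (k + 1) ≤
      κ * ((Finset.Icc (k - M) k).sup' (Finset.nonempty_Icc.mpr (Nat.sub_le k M)) V) + c) :
    ∀ k : ℕ, V k ≤
      κ ^ (k / (M + 1)) * ((Finset.Icc 0 M).sup' (Finset.nonempty_Icc.mpr (Nat.zero_le M)) V)
        + c / (1 - κ) := by
  set S := (Finset.Icc 0 M).sup' (Finset.nonempty_Icc.mpr (Nat.zero_le M)) V
  have hS : 0 ≤ S := (hVpos 0).trans (Finset.le_sup' V (by simp))
  have hfixed : κ * (c / (1 - κ)) + c = c / (1 - κ) := by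
    field_simp [(sub_pos.mpr hκ1).ne']
    ring
  have hD : 0 ≤ c / (1 - κ) := div_nonneg hc (sub_pos.mpr hκ1).le
  have hg : Monotone fun x => κ * x + c := fun x y hxy =>
    add_le_add_left (mul_le_mul_of_nonneg_left hxy hκ0) c
  have hf : Antitone fun j => κ ^ j * S + c / (1 - κ) := fun i j hij =>
    add_le_add_left (mul_le_mul_of_nonneg_right (pow_right_anti₀ hκ0 hκ1.le hij) hS) _
  refine le_of_windowed_sup_recursion hg hf (fun j => le_of_eq ?_) (fun k hk => ?_) hrec
  · rw [pow_succ']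
    linear_combination hfixed
  · have hVS : V k ≤ S := Finset.le_sup' V (by simpa using hk)
    simp only [pow_zero, one_mul]
    linarith
end

section
/- Let V: ℕ → ℝ≥0, κ ∈ [0,1), c ≥ 0, M ∈ ℕ, and suppose for all k ∈ ℕ, V(k+1) ≤ κ · max_{θ ∈ [max(0,k-M), k]} V(θ) + c. Then the sequence V is bounded: V(k) ≤ max_{θ ∈ [0,M]} V(θ) + c/(1-κ) for all k. -/
/-!
Any `B ≥ V 0` with `κ * B + c ≤ B` bounds `V` by strong induction, since the delay window
of `V (k + 1)` only looks back at indices `≤ k`. The bound `max_{[0, M]} V + c / (1 - κ)` is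
such a `B`, because `c / (1 - κ)` is the fixed point of `x ↦ κ * x + c`.
-/

open Finset

theorem le_of_le_mul_sup'_Icc_sub_add {V : ℕ → ℝ} {κ c B : ℝ} {M : ℕ} (hκ : 0 ≤ κ)
    (hB : κ * B + c ≤ B) (h0 : V 0 ≤ B)
    (hrec : ∀ k : ℕ, V (k + 1) ≤ κ * (Icc (k - M) k).sup' (nonempty_Icc.mpr (Nat.sub_le k M)) V + c)
    (k : ℕ) : V k ≤ B := by
  induction k using Nat.strong_induction_on with
  | _ k ih =>
    cases k with
    | zero => exact h0
    | succ n =>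
      have hwindow : (Icc (n - M) n).sup' (nonempty_Icc.mpr (Nat.sub_le n M)) V ≤ B :=
        sup'_le _ _ fun θ hθ => ih θ (Nat.lt_succ_of_le (mem_Icc.mp hθ).2)
      calc V (n + 1)
          ≤ κ * (Icc (n - M) n).sup' (nonempty_Icc.mpr (Nat.sub_le n M)) V + c := hrec n
        _ ≤ κ * B + c := by gcongr
        _ ≤ B := hB

theorem mul_add_div_one_sub_add_le {κ c S : ℝ} (hκ : κ < 1) (hS : 0 ≤ S) :
    κ * (S + c / (1 - κ)) + c ≤ S + c / (1 - κ) := by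
  have hfix : κ * (c / (1 - κ)) + c = c / (1 - κ) := by
    field_simp [(sub_pos.mpr hκ).ne']
    ring
  have hκS : κ * S ≤ S := mul_le_of_le_one_left hS hκ.le
  linarith

theorem razumikhin_bounded (V : ℕ → ℝ) (hVpos : ∀ k, 0 ≤ V k)
    (κ c : ℝ) (hκ0 : 0 ≤ κ) (hκ1 : κ < 1) (hc : 0 ≤ c) (M : ℕ)
    (hrec : ∀ k : ℕ, V (k + 1) ≤
      κ * ((Finset.Icc (k - M) k).sup' (Finset.nonempty_Icc.mpr (Nat.sub_le k M)) V) + c) :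
    ∀ k : ℕ, V k ≤
      ((Finset.Icc 0 M).sup' (Finset.nonempty_Icc.mpr (Nat.zero_le M)) V) + c / (1 - κ) := by
  have hV0 : V 0 ≤ (Icc 0 M).sup' (nonempty_Icc.mpr (Nat.zero_le M)) V :=
    le_sup' V (mem_Icc.mpr ⟨le_rfl, Nat.zero_le M⟩)
  have hshift : 0 ≤ c / (1 - κ) := div_nonneg hc (sub_pos.mpr hκ1).le
  exact le_of_le_mul_sup'_Icc_sub_add hκ0
    (mul_add_div_one_sub_add_le hκ1 ((hVpos 0).trans hV0)) (by linarith) hrec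
end

section
/- Let V: ℕ → ℝ≥0, κ ∈ [0,1), M ∈ ℕ, and suppose for all k ∈ ℕ, V(k+1) ≤ κ · max_{θ ∈ [max(0,k-M), k]} V(θ). Then V(k) → 0 as k → ∞, and in fact V converges to 0 exponentially: there exist p ≥ 1 and ρ ∈ [0,1) with V(k) ≤ p · ρ^k · max_{θ ∈ [0,M]} V(θ) for all k. -/
/-!
Every value is bounded by `κ` times the maximum over the previous window of `M + 1` values, so
(as `κ ≤ 1`) the initial maximum `W` bounds the whole sequence, and after each further block of
`M + 1` steps the bound improves by a factor `κ`. Hence `V k ≤ κ ^ ⌊k / (M + 1)⌋ * W`, and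
choosing `ρ < 1` with `κ ≤ ρ ^ (M + 1)` turns this into `V k ≤ ρ ^ (-M) * ρ ^ k * W`.
-/

open Finset

section Razumikhin

variable {V : ℕ → ℝ} {κ : ℝ} {M : ℕ}

lemma razumikhin_succ_le (hκ0 : 0 ≤ κ)
    (hrec : ∀ k : ℕ, V (k + 1) ≤
      κ * ((Icc (k - M) k).sup' (nonempty_Icc.mpr (Nat.sub_le k M)) V))
    {k : ℕ} {B : ℝ} (hB : ∀ θ ∈ Icc (k - M) k, V θ ≤ B) : V (k + 1) ≤ κ * B :=
  (hrec k).trans (mul_le_mul_of_nonneg_left (sup'_le _ _ hB) hκ0)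

lemma razumikhin_le_of_le_initial (hκ0 : 0 ≤ κ) (hκ1 : κ ≤ 1)
    (hrec : ∀ k : ℕ, V (k + 1) ≤
      κ * ((Icc (k - M) k).sup' (nonempty_Icc.mpr (Nat.sub_le k M)) V))
    {B : ℝ} (hB0 : 0 ≤ B) (hB : ∀ k ≤ M, V k ≤ B) (k : ℕ) : V k ≤ B := by
  induction k using Nat.strong_induction_on with
  | _ k ih =>
    rcases k with _ | k
    · exact hB 0 M.zero_le
    · calc V (k + 1) ≤ κ * B :=
            razumikhin_succ_le hκ0 hrec fun θ hθ => ih θ (by grind)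
        _ ≤ B := mul_le_of_le_one_left hB0 hκ1

lemma razumikhin_le_pow_mul (hκ0 : 0 ≤ κ)
    (hrec : ∀ k : ℕ, V (k + 1) ≤
      κ * ((Icc (k - M) k).sup' (nonempty_Icc.mpr (Nat.sub_le k M)) V))
    {B : ℝ} (hB : ∀ k, V k ≤ B) (j : ℕ) :
    ∀ k, j * (M + 1) ≤ k → V k ≤ κ ^ j * B := by
  induction j with
  | zero => intro k _; simpa using hB k
  | succ j ih =>
    rintro (_ | k) hk
    · simp at hk
    · calc V (k + 1) ≤ κ * (κ ^ j * B) :=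
            razumikhin_succ_le hκ0 hrec fun θ hθ => ih θ (by grind)
        _ = κ ^ (j + 1) * B := by ring

end Razumikhin

lemma exists_le_pow_of_lt_one {κ : ℝ} (hκ0 : 0 ≤ κ) (hκ1 : κ < 1) {n : ℕ} (hn : n ≠ 0) :
    ∃ ρ : ℝ, 0 < ρ ∧ ρ < 1 ∧ κ ≤ ρ ^ n := by
  set c : ℝ := (1 + κ) / 2 with hc
  have hc0 : 0 < c := by positivity
  refine ⟨c ^ ((n : ℝ)⁻¹), Real.rpow_pos_of_pos hc0 _,
    Real.rpow_lt_one hc0.le (by linarith [hc]) (by positivity), ?_⟩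
  rw [Real.rpow_inv_natCast_pow hc0.le hn]
  linarith [hc]

lemma pow_mul_div_le_inv_pow_mul {ρ : ℝ} (hρ0 : 0 < ρ) (hρ1 : ρ ≤ 1) (M k : ℕ) :
    ρ ^ ((M + 1) * (k / (M + 1))) ≤ (ρ ^ M)⁻¹ * ρ ^ k := by
  rw [le_inv_mul_iff₀ (by positivity), ← pow_add]
  exact pow_le_pow_of_le_one hρ0.le hρ1 (by grind [Nat.lt_mul_div_succ k M.succ_pos])

theorem razumikhin_exp_to_zero (V : ℕ → ℝ) (hVpos : ∀ k, 0 ≤ V k)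
    (κ : ℝ) (hκ0 : 0 ≤ κ) (hκ1 : κ < 1) (M : ℕ)
    (hrec : ∀ k : ℕ, V (k + 1) ≤
      κ * ((Finset.Icc (k - M) k).sup' (Finset.nonempty_Icc.mpr (Nat.sub_le k M)) V)) :
    Filter.Tendsto V Filter.atTop (nhds 0) ∧
      ∃ p ρ : ℝ, 1 ≤ p ∧ 0 ≤ ρ ∧ ρ < 1 ∧
        ∀ k : ℕ, V k ≤
          p * ρ ^ k * ((Finset.Icc 0 M).sup' (Finset.nonempty_Icc.mpr (Nat.zero_le M)) V) := by
  set W := (Icc 0 M).sup' (nonempty_Icc.mpr M.zero_le) V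
  have hW : ∀ k ≤ M, V k ≤ W := fun k hk => le_sup' V (by simpa using hk)
  have hW0 : 0 ≤ W := (hVpos 0).trans (hW 0 M.zero_le)
  have hbound := razumikhin_le_of_le_initial hκ0 hκ1.le hrec hW0 hW
  obtain ⟨ρ, hρ0, hρ1, hκρ⟩ := exists_le_pow_of_lt_one hκ0 hκ1 M.succ_ne_zero
  have hexp : ∀ k, V k ≤ (ρ ^ M)⁻¹ * ρ ^ k * W := fun k =>
    calc V k ≤ κ ^ (k / (M + 1)) * W :=
          razumikhin_le_pow_mul hκ0 hrec hbound _ k (Nat.div_mul_le_self k (M + 1))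
      _ ≤ ρ ^ ((M + 1) * (k / (M + 1))) * W := by
          rw [pow_mul]
          gcongr
      _ ≤ (ρ ^ M)⁻¹ * ρ ^ k * W := by
          gcongr
          exact pow_mul_div_le_inv_pow_mul hρ0 hρ1.le M k
  refine ⟨squeeze_zero hVpos hexp ?_, _, ρ, one_le_inv₀ (by positivity) |>.mpr
    (pow_le_one₀ hρ0.le hρ1.le), hρ0.le, hρ1, hexp⟩
  simpa using ((tendsto_pow_atTop_nhds_zero_of_lt_one hρ0.le hρ1).const_mul _).mul_const W
end

section
/- Let λ_{ij} (i,j ∈ {1,...,ℓ}) be linear class-K∞ functions (λ_{ij}(s) = a_{ij}·s with a_{ij} > 0) such that every cyclic composition satisfies λ_{i_1 i_2} ∘ λ_{i_2 i_3} ∘ ⋯ ∘ λ_{i_{r-1} i_1} < id for all cycles of length r ≤ ℓ. Equivalently, the spectral condition holds: every product a_{i_1 i_2}·a_{i_2 i_3}·⋯·a_{i_{r-1} i_1} < 1 along any cycle. Then there exist positive reals σ_1,...,σ_ℓ and κ ∈ [0,1) such that σ_i^{-1}·a_{ij}·σ_j ≤ κ for all i,j. -/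
/-!
Rescale the gains by `κ⁻¹`, where `κ < 1` is chosen so that every cycle of length `r ≤ ℓ` has
gain product at most `κ ^ r`; then every closed walk of length at most `ℓ` of the rescaled
gains has weight at most `1`. Take `σ i` to be the largest weight of a walk of length `< ℓ`
starting at `i`. Prepending the edge `i → j` to an optimal walk from `j` gives `κ⁻¹ a i j σ j ≤ σ i`: a walk of length `ℓ` visits some vertex twice, and cutting out
the closed walk in between does not decrease its weight.
-/

open Finset

section Walks

variable {ι : Type*}

def walkWeight (b : ι → ι → ℝ) (m : ℕ) (p : ℕ → ι) : ℝ :=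
  ∏ t ∈ range m, b (p t) (p (t + 1))

def cycleProd (b : ι → ι → ℝ) (r : ℕ) (idx : ℕ → ι) : ℝ :=
  ∏ t ∈ range r, b (idx t) (idx ((t + 1) % r))

variable (b : ι → ι → ℝ)

theorem walkWeight_add (m k : ℕ) (p : ℕ → ι) :
    walkWeight b (m + k) p = walkWeight b m p * walkWeight b k (fun t => p (m + t)) := by
  simp only [walkWeight, prod_range_add, add_assoc]

theorem walkWeight_succ (m : ℕ) (p : ℕ → ι) :
    walkWeight b (m + 1) p = b (p 0) (p 1) * walkWeight b m (fun t => p (t + 1)) := by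
  rw [walkWeight, prod_range_succ', mul_comm]
  rfl

theorem walkWeight_congr {m : ℕ} {p q : ℕ → ι} (h : ∀ t ≤ m, p t = q t) :
    walkWeight b m p = walkWeight b m q :=
  prod_congr rfl fun t ht => by
    rw [mem_range] at ht
    rw [h t ht.le, h (t + 1) ht]

theorem walkWeight_const_mul (c : ℝ) (m : ℕ) (p : ℕ → ι) :
    walkWeight (fun i j => c * b i j) m p = c ^ m * walkWeight b m p := by
  rw [walkWeight, prod_mul_distrib, prod_const, card_range, walkWeight]

theorem walkWeight_nonneg (hb : ∀ i j, 0 ≤ b i j) (m : ℕ) (p : ℕ → ι) :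
    0 ≤ walkWeight b m p :=
  prod_nonneg fun _ _ => hb _ _

theorem walkWeight_eq_cycleProd {r : ℕ} {p : ℕ → ι} (hp : p r = p 0) :
    walkWeight b r p = cycleProd b r p :=
  prod_congr rfl fun t ht => by
    rw [mem_range] at ht
    rcases (Nat.succ_le_of_lt ht).lt_or_eq with h | h
    · rw [Nat.mod_eq_of_lt h]
    · subst h
      rw [Nat.mod_self, hp]

theorem cycleProd_congr {r : ℕ} {idx idx' : ℕ → ι} (h : ∀ t < r, idx t = idx' t) :
    cycleProd b r idx = cycleProd b r idx' :=
  prod_congr rfl fun t ht => by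
    rw [mem_range] at ht
    rw [h t ht, h _ (Nat.mod_lt _ (Nat.zero_lt_of_lt ht))]

theorem exists_walkWeight_le_of_closed_segment (hb : ∀ i j, 0 ≤ b i j) {s r d : ℕ}
    {p : ℕ → ι} (hps : p (s + r) = p s) (hloop : walkWeight b r (fun t => p (s + t)) ≤ 1) :
    ∃ q : ℕ → ι, q 0 = p 0 ∧ walkWeight b (s + r + d) p ≤ walkWeight b (s + d) q := by
  set q : ℕ → ι := fun t => if t ≤ s then p t else p (t + r)
  have hhead : walkWeight b s q = walkWeight b s p :=
    walkWeight_congr b fun t ht => if_pos ht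
  have htail : (fun t => q (s + t)) = fun t => p (s + r + t) := by
    funext t
    rcases Nat.eq_zero_or_pos t with rfl | ht
    · simp [q, hps]
    · simp only [q, if_neg (by omega : ¬s + t ≤ s)]
      congr 1
      omega
  refine ⟨q, if_pos (Nat.zero_le s), ?_⟩
  rw [walkWeight_add, walkWeight_add, walkWeight_add, hhead, htail, mul_right_comm]
  exact mul_le_of_le_one_right
    (mul_nonneg (walkWeight_nonneg b hb _ _) (walkWeight_nonneg b hb _ _)) hloop

theorem exists_add_le_card_apply_eq [Fintype ι] (p : ℕ → ι) :
    ∃ s r, 0 < r ∧ s + r ≤ Fintype.card ι ∧ p (s + r) = p s := by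
  obtain ⟨x, y, hxy, hp⟩ := Fintype.exists_ne_map_eq_of_card_lt
    (fun k : Fin (Fintype.card ι + 1) => p k) (by simp)
  rcases Fin.lt_or_lt_of_ne hxy with h | h
  · exact ⟨x, y - x, by omega, by omega, by simpa [Nat.add_sub_cancel' h.le] using hp.symm⟩
  · exact ⟨y, x - y, by omega, by omega, by simpa [Nat.add_sub_cancel' h.le] using hp⟩

end Walks

section MaxWalk

variable {ι : Type*} [Fintype ι] [Nonempty ι] (b : ι → ι → ℝ)

/-- The `m`-th max-times power of `b`, applied to the all-ones vector. -/
def maxWalkWeight : ℕ → ι → ℝ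
  | 0, _ => 1
  | m + 1, i => univ.sup' univ_nonempty fun j => b i j * maxWalkWeight m j

theorem maxWalkWeight_succ (m : ℕ) (i : ι) :
    maxWalkWeight b (m + 1) i = univ.sup' univ_nonempty fun j => b i j * maxWalkWeight b m j :=
  rfl

theorem walkWeight_le_maxWalkWeight (hb : ∀ i j, 0 ≤ b i j) (m : ℕ) (p : ℕ → ι) :
    walkWeight b m p ≤ maxWalkWeight b m (p 0) := by
  induction m generalizing p with
  | zero => exact (prod_range_zero _).le
  | succ m ih =>
    rw [walkWeight_succ, maxWalkWeight_succ]
    exact (mul_le_mul_of_nonneg_left (ih _) (hb _ _)).trans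
      (le_sup' (fun j => b (p 0) j * maxWalkWeight b m j) (mem_univ (p 1)))

theorem exists_walkWeight_eq_maxWalkWeight (m : ℕ) (i : ι) :
    ∃ p : ℕ → ι, p 0 = i ∧ walkWeight b m p = maxWalkWeight b m i := by
  induction m generalizing i with
  | zero => exact ⟨fun _ => i, rfl, prod_range_zero _⟩
  | succ m ih =>
    obtain ⟨j, -, hj⟩ := exists_mem_eq_sup' univ_nonempty fun j => b i j * maxWalkWeight b m j
    obtain ⟨q, hq0, hq⟩ := ih j
    refine ⟨fun t => if t = 0 then i else q (t - 1), rfl, ?_⟩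
    rw [walkWeight_succ, maxWalkWeight_succ, hj, ← hq, ← hq0]
    rfl

variable {b}

theorem exists_lt_card_maxWalkWeight_le (hb : ∀ i j, 0 ≤ b i j)
    (hcyc : ∀ r, 0 < r → r ≤ Fintype.card ι → ∀ p : ℕ → ι, p r = p 0 → walkWeight b r p ≤ 1)
    {m : ℕ} (hm : m ≤ Fintype.card ι) (i : ι) :
    ∃ k < Fintype.card ι, maxWalkWeight b m i ≤ maxWalkWeight b k i := by
  rcases hm.lt_or_eq with hm | rfl
  · exact ⟨m, hm, le_rfl⟩
  obtain ⟨p, rfl, hp⟩ := exists_walkWeight_eq_maxWalkWeight b (Fintype.card ι) i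
  obtain ⟨s, r, hr, hsr, hps⟩ := exists_add_le_card_apply_eq p
  obtain ⟨d, hd⟩ := Nat.exists_eq_add_of_le hsr
  obtain ⟨q, hq0, hpq⟩ := exists_walkWeight_le_of_closed_segment b hb (d := d) hps
    (hcyc r hr (by omega) _ hps)
  refine ⟨s + d, by omega, ?_⟩
  rw [← hp, hd, ← hq0]
  exact hpq.trans (walkWeight_le_maxWalkWeight b hb _ q)

theorem exists_scaling_of_closed_walk_le_one (hb : ∀ i j, 0 ≤ b i j)
    (hcyc : ∀ r, 0 < r → r ≤ Fintype.card ι → ∀ p : ℕ → ι, p r = p 0 → walkWeight b r p ≤ 1) :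
    ∃ σ : ι → ℝ, (∀ i, 1 ≤ σ i) ∧ ∀ i j, b i j * σ j ≤ σ i := by
  have hne : (range (Fintype.card ι)).Nonempty := nonempty_range_iff.2 Fintype.card_ne_zero
  set σ : ι → ℝ := fun i => (range (Fintype.card ι)).sup' hne fun m => maxWalkWeight b m i
  have hσ : ∀ {m} i, m ≤ Fintype.card ι → maxWalkWeight b m i ≤ σ i := fun i hm => by
    obtain ⟨k, hk, hle⟩ := exists_lt_card_maxWalkWeight_le hb hcyc hm i
    exact hle.trans (le_sup' (fun m => maxWalkWeight b m i) (mem_range.2 hk))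
  refine ⟨σ, fun i => hσ (m := 0) i (Nat.zero_le _), fun i j => ?_⟩
  obtain ⟨m, hm, hσj⟩ := exists_mem_eq_sup' hne fun m => maxWalkWeight b m j
  calc b i j * σ j = b i j * maxWalkWeight b m j := congrArg _ hσj
    _ ≤ maxWalkWeight b (m + 1) i :=
      le_sup' (fun j => b i j * maxWalkWeight b m j) (mem_univ j)
    _ ≤ σ i := hσ i (mem_range.1 hm)

end MaxWalk

/-- Only the values of `idx` below `N` matter, so finitely many cycle products occur. -/
theorem exists_cycleProd_le_of_lt_one {ι : Type*} [Fintype ι] [Nonempty ι] {a : ι → ι → ℝ}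
    (ha : ∀ i j, 0 < a i j) {N : ℕ} (hN : 0 < N)
    (hcyc : ∀ r, 1 ≤ r → r ≤ N → ∀ idx : ℕ → ι, cycleProd a r idx < 1) :
    ∃ M, 0 < M ∧ M < 1 ∧ ∀ r, 1 ≤ r → r ≤ N → ∀ idx : ℕ → ι, cycleProd a r idx ≤ M := by
  set F : Fin N × (Fin N → ι) → ℝ := fun q =>
    cycleProd a (q.1 + 1) fun t => q.2 ⟨t % N, Nat.mod_lt _ hN⟩
  set q₀ : Fin N × (Fin N → ι) := (⟨0, hN⟩, fun _ => Classical.arbitrary ι)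
  have hne : (univ : Finset (Fin N × (Fin N → ι))).Nonempty := ⟨q₀, mem_univ _⟩
  refine ⟨univ.sup' hne F, ?_, ?_, ?_⟩
  · exact (prod_pos fun _ _ => ha _ _).trans_le (le_sup' F (mem_univ q₀))
  · exact (sup'_lt_iff hne).2 fun q _ => hcyc _ (Nat.le_add_left _ _) q.1.isLt _
  · intro r hr hrN idx
    obtain ⟨k, rfl⟩ := Nat.exists_eq_add_of_le' hr
    refine le_of_eq_of_le ?_ (le_sup' F (mem_univ ((⟨k, hrN⟩, fun t => idx t) : Fin N × (Fin N → ι))))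
    exact cycleProd_congr a fun t ht => by simp [Nat.mod_eq_of_lt (ht.trans_le hrN)]

theorem exists_pos_lt_one_forall_le_pow {M : ℝ} (hM₀ : 0 < M) (hM₁ : M < 1) (N : ℕ) :
    ∃ κ : ℝ, 0 < κ ∧ κ < 1 ∧ ∀ r ≤ N, M ≤ κ ^ r := by
  set κ := M ^ ((N + 1 : ℕ) : ℝ)⁻¹
  have hκ₁ : κ < 1 := Real.rpow_lt_one hM₀.le hM₁ (by positivity)
  refine ⟨κ, by positivity, hκ₁, fun r hr => ?_⟩
  calc M = κ ^ (N + 1) := (Real.rpow_inv_natCast_pow hM₀.le N.succ_ne_zero).symm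
    _ ≤ κ ^ r := pow_le_pow_of_le_one (by positivity) hκ₁.le (by omega)

theorem small_gain_scaling {ι : Type*} [Fintype ι] [Nonempty ι]
    (a : ι → ι → ℝ) (ha : ∀ i j, 0 < a i j)
    (hcycle : ∀ r : ℕ, 1 ≤ r → r ≤ Fintype.card ι → ∀ idx : ℕ → ι,
      ∏ t ∈ Finset.range r, a (idx t) (idx ((t + 1) % r)) < 1) :
    ∃ σ : ι → ℝ, (∀ i, 0 < σ i) ∧
      ∃ κ : ℝ, 0 ≤ κ ∧ κ < 1 ∧ ∀ i j, (σ i)⁻¹ * a i j * σ j ≤ κ := by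
  obtain ⟨M, hM₀, hM₁, hM⟩ := exists_cycleProd_le_of_lt_one ha Fintype.card_pos hcycle
  obtain ⟨κ, hκ₀, hκ₁, hκ⟩ := exists_pos_lt_one_forall_le_pow hM₀ hM₁ (Fintype.card ι)
  have hcyc : ∀ r, 0 < r → r ≤ Fintype.card ι → ∀ p : ℕ → ι, p r = p 0 →
      walkWeight (fun i j => κ⁻¹ * a i j) r p ≤ 1 := fun r hr hrn p hp => by
    rw [walkWeight_const_mul, walkWeight_eq_cycleProd a hp, inv_pow, inv_mul_le_one₀ (by positivity)]
    exact (hM r hr hrn p).trans (hκ r hrn)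
  obtain ⟨σ, hσ, hscale⟩ :=
    exists_scaling_of_closed_walk_le_one
      (fun i j => mul_nonneg (inv_nonneg.2 hκ₀.le) (ha i j).le) hcyc
  have hσ₀ : ∀ i, 0 < σ i := fun i => one_pos.trans_le (hσ i)
  refine ⟨σ, hσ₀, κ, hκ₀.le, hκ₁, fun i j => ?_⟩
  have := hscale i j
  rw [mul_assoc, inv_mul_le_iff₀ (hσ₀ i)]
  rw [mul_assoc, inv_mul_le_iff₀ hκ₀] at this
  linarith
end

section
/- Suppose for each i ∈ {1,...,ℓ} there is a function V_i: ℕ → ℝ≥0 and constants a_{ij} ≥ 0 and b ≥ 0 such that V_i(k+1) ≤ max_{θ ∈ [max(0,k-M),k], j} a_{ij}·V_j(θ) + b for all k. Suppose moreover there exist positive reals σ_1,...,σ_ℓ and κ ∈ [0,1) with a_{ij}·σ_j/σ_i ≤ κ for all i,j. Then V(k) := max_i V_i(k)/σ_i satisfies V(k+1) ≤ κ·max_{θ ∈ [max(0,k-M),k]} V(θ) + b·max_i(1/σ_i) for all k. -/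
/-! Measured in the weights `σ`, every gain `a i j` contracts by `κ`: if `V j θ ≤ σ j * T` for all
`j` and all `θ` in the delay window, where `T` is the largest weighted state there, then
`a i j * V j θ ≤ (a i j * σ j / σ i) * σ i * T ≤ κ * T * σ i`. Dividing the recursion for `V i`
by `σ i` and maximizing over `i` gives the claim, the offset contributing `b / σ i`. -/

open Finset

lemma mul_le_of_le_mul_of_gain_le {𝕜 : Type*} [Field 𝕜] [LinearOrder 𝕜] [IsStrictOrderedRing 𝕜]
    {a v s t κ T : 𝕜} (ha : 0 ≤ a) (ht : 0 < t)
    (hT : 0 ≤ T) (hv : v ≤ s * T) (hgain : a * s / t ≤ κ) : a * v ≤ κ * T * t :=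
  calc a * v ≤ a * s * T := by rw [mul_assoc]; exact mul_le_mul_of_nonneg_left hv ha
    _ = a * s / t * T * t := by field_simp
    _ ≤ κ * T * t := by gcongr

section WeightedMax

variable {α ι : Type*} [Fintype ι] [Nonempty ι] {s : Finset α} (hs : s.Nonempty)
  (V : ι → α → ℝ) {σ : ι → ℝ}

lemma le_mul_sup'_sup'_div (hσ : ∀ i, 0 < σ i) {θ : α} (hθ : θ ∈ s) (j : ι) :
    V j θ ≤ σ j * s.sup' hs (fun θ => univ.sup' univ_nonempty fun i => V i θ / σ i) :=
  (div_le_iff₀' (hσ j)).1 <| le_sup'_of_le _ hθ <| le_sup' (fun i => V i θ / σ i) (mem_univ j)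

lemma sup'_sup'_div_nonneg (hV : ∀ i θ, 0 ≤ V i θ) (hσ : ∀ i, 0 < σ i) :
    0 ≤ s.sup' hs (fun θ => univ.sup' univ_nonempty fun i => V i θ / σ i) := by
  obtain ⟨θ, hθ⟩ := hs
  obtain ⟨i⟩ := ‹Nonempty ι›
  exact le_sup'_of_le _ hθ <| le_sup'_of_le _ (mem_univ i) <| div_nonneg (hV i θ) (hσ i).le

end WeightedMax

theorem small_gain_composite_lyapunov_general {ι : Type*} [Fintype ι] [Nonempty ι]
    (V : ι → ℕ → ℝ) (hVpos : ∀ i k, 0 ≤ V i k)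
    (a : ι → ι → ℝ) (ha : ∀ i j, 0 ≤ a i j) (b : ℝ) (hb : 0 ≤ b) (M : ℕ)
    (hrec : ∀ i (k : ℕ), V i (k + 1) ≤
      (((Finset.Icc (k - M) k) ×ˢ (Finset.univ : Finset ι)).sup'
        (Finset.Nonempty.product (Finset.nonempty_Icc.mpr (Nat.sub_le k M)) Finset.univ_nonempty)
        (fun p => a i p.2 * V p.2 p.1)) + b)
    (σ : ι → ℝ) (hσ : ∀ i, 0 < σ i) (κ : ℝ)
    (hsg : ∀ i j, a i j * σ j / σ i ≤ κ) :
    ∀ k : ℕ,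
      (Finset.univ.sup' Finset.univ_nonempty fun i => V i (k + 1) / σ i) ≤
        κ * ((Finset.Icc (k - M) k).sup' (Finset.nonempty_Icc.mpr (Nat.sub_le k M))
              (fun θ => Finset.univ.sup' Finset.univ_nonempty fun i => V i θ / σ i))
          + b * (Finset.univ.sup' Finset.univ_nonempty fun i => 1 / σ i) := by
  intro k
  have hwin : (Icc (k - M) k).Nonempty := nonempty_Icc.mpr (Nat.sub_le k M)
  set T := (Icc (k - M) k).sup' hwin fun θ => univ.sup' univ_nonempty fun i => V i θ / σ i
  have hT : 0 ≤ T := sup'_sup'_div_nonneg hwin V hVpos hσ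
  refine sup'_le _ _ fun i _ => ?_
  have hrec_i := hrec i k
  set S := ((Icc (k - M) k) ×ˢ (univ : Finset ι)).sup' (hwin.product univ_nonempty)
    fun p => a i p.2 * V p.2 p.1
  have hgain : S / σ i ≤ κ * T := by
    refine (div_le_iff₀ (hσ i)).2 <| sup'_le _ _ fun p hp => ?_
    exact mul_le_of_le_mul_of_gain_le (ha i p.2) (hσ i) hT
      (le_mul_sup'_sup'_div hwin V hσ (mem_product.1 hp).1 p.2) (hsg i p.2)
  calc V i (k + 1) / σ i ≤ (S + b) / σ i := div_le_div_of_nonneg_right hrec_i (hσ i).le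
    _ = S / σ i + b * (1 / σ i) := by ring
    _ ≤ κ * T + b * univ.sup' univ_nonempty fun i => 1 / σ i :=
        add_le_add hgain <| mul_le_mul_of_nonneg_left (le_sup' (fun i => 1 / σ i) (mem_univ i)) hb

theorem small_gain_composite_lyapunov {ι : Type*} [Fintype ι] [Nonempty ι]
    (V : ι → ℕ → ℝ) (hVpos : ∀ i k, 0 ≤ V i k)
    (a : ι → ι → ℝ) (ha : ∀ i j, 0 ≤ a i j) (b : ℝ) (hb : 0 ≤ b) (M : ℕ)
    (hrec : ∀ i (k : ℕ), V i (k + 1) ≤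
      (((Finset.Icc (k - M) k) ×ˢ (Finset.univ : Finset ι)).sup'
        (Finset.Nonempty.product (Finset.nonempty_Icc.mpr (Nat.sub_le k M)) Finset.univ_nonempty)
        (fun p => a i p.2 * V p.2 p.1)) + b)
    (σ : ι → ℝ) (hσ : ∀ i, 0 < σ i) (κ : ℝ) (hκ0 : 0 ≤ κ) (hκ1 : κ < 1)
    (hsg : ∀ i j, a i j * σ j / σ i ≤ κ) :
    ∀ k : ℕ,
      (Finset.univ.sup' Finset.univ_nonempty fun i => V i (k + 1) / σ i) ≤
        κ * ((Finset.Icc (k - M) k).sup' (Finset.nonempty_Icc.mpr (Nat.sub_le k M))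
              (fun θ => Finset.univ.sup' Finset.univ_nonempty fun i => V i θ / σ i))
          + b * (Finset.univ.sup' Finset.univ_nonempty fun i => 1 / σ i) :=
  small_gain_composite_lyapunov_general V hVpos a ha b hb M hrec σ hσ κ hsg
end

section
/- Let x̂_i(k) = d̂_i(k) − d_i be the estimation error of node i in the unperturbed biased min-consensus iteration with nominal weights. Then for every non-source node i and every k: if x̂_i(k+1) ≥ 0 then |x̂_i(k+1)| ≤ |x̂_j(k)| where j is any true constraining node of i (a minimizer of d_j + w_{ij}); and if x̂_i(k+1) < 0 then |x̂_i(k+1)| ≤ |x̂_j(k)| where j is the minimizer of d̂_j(k) + w_{ij}. -/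
/-- The weight (length) of a walk: the sum of the weights of its constituent edges. -/
def SimpleGraph.Walk.weightSum {V : Type*} {G : SimpleGraph V} (w : V → V → ℝ)
    {a b : V} (p : G.Walk a b) : ℝ :=
  (p.darts.map fun d => w d.toProd.1 d.toProd.2).sum

/-- The length of the shortest weighted path from `i` to its nearest source in `S`. -/
noncomputable def distToSource {V : Type*} (G : SimpleGraph V) (w : V → V → ℝ)
    (S : Set V) (i : V) : ℝ :=
  sInf {c : ℝ | ∃ s ∈ S, ∃ p : G.Walk i s, p.weightSum w = c}

/-!
Write `x̂ = d̂ - d`. For a constraining neighbour `j` of `i` (`d i = d j + w i j`), the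
update `d̂(k+1) i ≤ d̂ k j + w i j` gives `x̂(k+1) i ≤ x̂ k j`, which bounds a nonnegative
error. For the neighbour `j` attaining the update (`d̂(k+1) i = d̂ k j + w i j`), the triangle
inequality `d i ≤ d j + w i j` gives `x̂ k j ≤ x̂(k+1) i`, which bounds a negative error.
-/

namespace SimpleGraph

variable {V : Type*} {G : SimpleGraph V}

@[simp]
lemma Walk.weightSum_cons (w : V → V → ℝ) {u v b : V} (h : G.Adj u v) (p : G.Walk v b) :
    (Walk.cons h p).weightSum w = w u v + p.weightSum w := by
  simp [Walk.weightSum]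

lemma Walk.weightSum_nonneg {w : V → V → ℝ} (hw : ∀ i j, G.Adj i j → 0 ≤ w i j)
    {a b : V} (p : G.Walk a b) : 0 ≤ p.weightSum w :=
  List.sum_nonneg <| List.forall_mem_map.mpr fun d _ => hw _ _ d.adj

lemma csInf_neighbor_le [Finite V] (g : V → ℝ) {i j : V} (hij : G.Adj i j) :
    sInf {x : ℝ | ∃ l, G.Adj i l ∧ x = g l} ≤ g j := by
  have hfin : {x : ℝ | ∃ l, G.Adj i l ∧ x = g l}.Finite :=
    (Set.finite_range g).subset (by rintro _ ⟨l, -, rfl⟩; exact ⟨l, rfl⟩)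
  exact csInf_le hfin.bddBelow ⟨j, hij, rfl⟩

lemma csInf_neighbor_eq_of_le (g : V → ℝ) {i j : V} (hij : G.Adj i j)
    (hmin : ∀ l, G.Adj i l → g j ≤ g l) :
    sInf {x : ℝ | ∃ l, G.Adj i l ∧ x = g l} = g j :=
  IsLeast.csInf_eq ⟨⟨j, hij, rfl⟩, by rintro _ ⟨l, hl, rfl⟩; exact hmin l hl⟩

end SimpleGraph

open SimpleGraph in
lemma distToSource_le_add_of_adj {V : Type*} {G : SimpleGraph V} {w : V → V → ℝ}
    (hw : ∀ i j, G.Adj i j → 0 ≤ w i j) {S : Set V} {i j : V}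
    (hreach : ∃ s ∈ S, G.Reachable j s) (hij : G.Adj i j) :
    distToSource G w S i ≤ distToSource G w S j + w i j := by
  obtain ⟨s, hs, ⟨q⟩⟩ := hreach
  have hbdd : BddBelow {c : ℝ | ∃ s ∈ S, ∃ p : G.Walk i s, p.weightSum w = c} :=
    ⟨0, by rintro _ ⟨-, -, p, rfl⟩; exact p.weightSum_nonneg hw⟩
  suffices distToSource G w S i - w i j ≤ distToSource G w S j by linarith
  refine le_csInf ⟨_, s, hs, q, rfl⟩ ?_
  rintro _ ⟨t, ht, p, rfl⟩
  have hcons := csInf_le hbdd ⟨t, ht, Walk.cons hij p, rfl⟩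
  rw [Walk.weightSum_cons] at hcons
  exact sub_le_iff_le_add'.mpr hcons

theorem error_nonexpansive_general {V : Type*} [Fintype V] (G : SimpleGraph V) (hG : G.Connected)
    (w : V → V → ℝ) (hw_pos : ∀ i j, G.Adj i j → 0 < w i j)
    (S : Set V) (hS : S.Nonempty)
    (d : V → ℝ) (hd : d = distToSource G w S)
    (dhat : ℕ → V → ℝ)
    (hrec : ∀ k : ℕ, ∀ i ∉ S, dhat (k + 1) i =
      sInf {x : ℝ | ∃ j, G.Adj i j ∧ x = dhat k j + w i j}) :
    ∀ k : ℕ, ∀ i ∉ S,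
      (0 ≤ dhat (k + 1) i - d i →
        ∀ j, G.Adj i j → d i = d j + w i j →
          |dhat (k + 1) i - d i| ≤ |dhat k j - d j|) ∧
      (dhat (k + 1) i - d i < 0 →
        ∀ j, G.Adj i j → (∀ l, G.Adj i l → dhat k j + w i j ≤ dhat k l + w i l) →
          |dhat (k + 1) i - d i| ≤ |dhat k j - d j|) := by
  intro k i hi
  refine ⟨fun hpos j hij hdij => ?_, fun hneg j hij hmin => ?_⟩
  · have hupd : dhat (k + 1) i ≤ dhat k j + w i j :=
      hrec k i hi ▸ SimpleGraph.csInf_neighbor_le (fun l => dhat k l + w i l) hij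
    rw [abs_of_nonneg hpos]
    exact le_trans (by linarith) (le_abs_self (dhat k j - d j))
  · have hupd : dhat (k + 1) i = dhat k j + w i j :=
      (hrec k i hi).trans <|
        SimpleGraph.csInf_neighbor_eq_of_le (fun l => dhat k l + w i l) hij hmin
    obtain ⟨s, hs⟩ := hS
    have hw : ∀ a b, G.Adj a b → 0 ≤ w a b := fun a b h => (hw_pos a b h).le
    have htri : d i ≤ d j + w i j :=
      hd ▸ distToSource_le_add_of_adj hw ⟨s, hs, hG.preconnected j s⟩ hij
    exact abs_le_abs_of_nonpos hneg.le (by linarith)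

theorem error_nonexpansive {V : Type*} [Fintype V] (G : SimpleGraph V) (hG : G.Connected)
    (w : V → V → ℝ) (hw_pos : ∀ i j, G.Adj i j → 0 < w i j)
    (hw_symm : ∀ i j, w i j = w j i)
    (S : Set V) (hS : S.Nonempty) (hSproper : S ≠ Set.univ)
    (d : V → ℝ) (hd : d = distToSource G w S)
    (dhat : ℕ → V → ℝ)
    (h0 : ∀ i, 0 ≤ dhat 0 i)
    (hsrc : ∀ k : ℕ, ∀ i ∈ S, dhat k i = 0)
    (hrec : ∀ k : ℕ, ∀ i ∉ S, dhat (k + 1) i =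
      sInf {x : ℝ | ∃ j, G.Adj i j ∧ x = dhat k j + w i j}) :
    ∀ k : ℕ, ∀ i ∉ S,
      (0 ≤ dhat (k + 1) i - d i →
        ∀ j, G.Adj i j → d i = d j + w i j →
          |dhat (k + 1) i - d i| ≤ |dhat k j - d j|) ∧
      (dhat (k + 1) i - d i < 0 →
        ∀ j, G.Adj i j → (∀ l, G.Adj i l → dhat k j + w i j ≤ dhat k l + w i l) →
          |dhat (k + 1) i - d i| ≤ |dhat k j - d j|) :=
  error_nonexpansive_general G hG w hw_pos S hS d hd dhat hrec
end

section
/- In the unperturbed biased min-consensus iteration with nonnegative initial estimates, if i ∉ S, x̂_i(k+1) < 0, and the current constraining node j (minimizer of d̂_j(k) + w_{ij}) is not a true constraining node of i, then |x̂_i(k+1)| ≤ ζ·|x̂_j(k)| + ζ·0, i.e., the error contracts by factor ζ, where ζ ∈ (0,1) is the constant satisfying d_i/(d_l + w_{il}) ≤ ζ for all non-true-constraining neighbors l. -/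
theorem sub_add_le_mul_abs_sub {a b w D ζ : ℝ} (ha : 0 ≤ a) (hw : 0 ≤ w) (hζ0 : 0 ≤ ζ)
    (hζ1 : ζ ≤ 1) (hD : D ≤ ζ * (b + w)) : D - (a + w) ≤ ζ * |a - b| := by
  rcases le_or_gt b a with hba | hab
  · rw [abs_of_nonneg (sub_nonneg.mpr hba)]
    rcases le_or_gt 0 b with hb | hb <;> nlinarith
  · rw [abs_of_neg (sub_neg.mpr hab)]
    nlinarith

theorem SimpleGraph.sInf_setOf_adj_eq_of_le {V : Type*} {G : SimpleGraph V} {f : V → ℝ} {i j : V}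
    (hij : G.Adj i j) (hmin : ∀ l, G.Adj i l → f j ≤ f l) :
    sInf {x : ℝ | ∃ l, G.Adj i l ∧ x = f l} = f j :=
  IsLeast.csInf_eq ⟨⟨j, hij, rfl⟩, by rintro x ⟨l, hl, rfl⟩; exact hmin l hl⟩

theorem SimpleGraph.minConsensus_nonneg {V : Type*} (G : SimpleGraph V) (w : V → V → ℝ)
    (hw : ∀ i j, G.Adj i j → 0 ≤ w i j) (S : Set V) (dhat : ℕ → V → ℝ)
    (h0 : ∀ i, 0 ≤ dhat 0 i) (hsrc : ∀ k : ℕ, ∀ i ∈ S, dhat k i = 0)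
    (hrec : ∀ k : ℕ, ∀ i ∉ S, dhat (k + 1) i =
      sInf {x : ℝ | ∃ j, G.Adj i j ∧ x = dhat k j + w i j}) :
    ∀ k i, 0 ≤ dhat k i := by
  intro k
  induction k with
  | zero => exact h0
  | succ k ih =>
    intro i
    by_cases hi : i ∈ S
    · exact (hsrc _ i hi).ge
    · rw [hrec k i hi]
      exact Real.sInf_nonneg fun x ⟨j, hj, hx⟩ => hx ▸ add_nonneg (ih j) (hw i j hj)

theorem error_contracts_by_zeta_general {V : Type*} (G : SimpleGraph V)
    (w : V → V → ℝ) (hw_pos : ∀ i j, G.Adj i j → 0 < w i j)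
    (S : Set V)
    (d : V → ℝ)
    (dhat : ℕ → V → ℝ)
    (h0 : ∀ i, 0 ≤ dhat 0 i)
    (hsrc : ∀ k : ℕ, ∀ i ∈ S, dhat k i = 0)
    (hrec : ∀ k : ℕ, ∀ i ∉ S, dhat (k + 1) i =
      sInf {x : ℝ | ∃ j, G.Adj i j ∧ x = dhat k j + w i j})
    (ζ : ℝ) (hζ0 : 0 < ζ) (hζ1 : ζ < 1)
    (k : ℕ) (i : V) (hiS : i ∉ S)
    (hζ : ∀ l, G.Adj i l → d i ≠ d l + w i l → d i ≤ ζ * (d l + w i l))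
    (j : V) (hij : G.Adj i j)
    (hmin : ∀ l, G.Adj i l → dhat k j + w i j ≤ dhat k l + w i l)
    (hnottrue : d i ≠ d j + w i j)
    (hneg : dhat (k + 1) i - d i < 0) :
    |dhat (k + 1) i - d i| ≤ ζ * |dhat k j - d j| := by
  have hw : ∀ i j, G.Adj i j → 0 ≤ w i j := fun i j h => (hw_pos i j h).le
  have hval : dhat (k + 1) i = dhat k j + w i j :=
    (hrec k i hiS).trans (G.sInf_setOf_adj_eq_of_le (f := fun l => dhat k l + w i l) hij hmin)
  rw [abs_of_neg hneg, neg_sub, hval]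
  exact sub_add_le_mul_abs_sub (G.minConsensus_nonneg w hw S dhat h0 hsrc hrec k j)
    (hw i j hij) hζ0.le hζ1.le (hζ j hij hnottrue)

theorem error_contracts_by_zeta {V : Type*} [Fintype V] (G : SimpleGraph V) (hG : G.Connected)
    (w : V → V → ℝ) (hw_pos : ∀ i j, G.Adj i j → 0 < w i j)
    (hw_symm : ∀ i j, w i j = w j i)
    (S : Set V) (hS : S.Nonempty) (hSproper : S ≠ Set.univ)
    (d : V → ℝ) (hd : d = distToSource G w S)
    (dhat : ℕ → V → ℝ)
    (h0 : ∀ i, 0 ≤ dhat 0 i)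
    (hsrc : ∀ k : ℕ, ∀ i ∈ S, dhat k i = 0)
    (hrec : ∀ k : ℕ, ∀ i ∉ S, dhat (k + 1) i =
      sInf {x : ℝ | ∃ j, G.Adj i j ∧ x = dhat k j + w i j})
    (ζ : ℝ) (hζ0 : 0 < ζ) (hζ1 : ζ < 1)
    (k : ℕ) (i : V) (hiS : i ∉ S)
    (hζ : ∀ l, G.Adj i l → d i ≠ d l + w i l → d i ≤ ζ * (d l + w i l))
    (j : V) (hij : G.Adj i j)
    (hmin : ∀ l, G.Adj i l → dhat k j + w i j ≤ dhat k l + w i l)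
    (hnottrue : d i ≠ d j + w i j)
    (hneg : dhat (k + 1) i - d i < 0) :
    |dhat (k + 1) i - d i| ≤ ζ * |dhat k j - d j| :=
  error_contracts_by_zeta_general G w hw_pos S d dhat h0 hsrc hrec ζ hζ0 hζ1 k i hiS hζ j hij hmin
    hnottrue hneg
end

section
/- Let V: ℕ → ℝ≥0, ζ ∈ (0,1), M ∈ ℕ, c ≥ 0, and suppose V(k+1) ≤ ζ·max_{θ∈[max(0,k−M),k]} V(θ) + c for all k ≥ M. Then for all k ≥ M, V(k+1) ≤ ζ^{(k−M+1)/(M+1)}·max_{θ∈[0,M]} V(θ) + c/(1−ζ), where the exponent is interpreted as a real power. -/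
/-!
Compare `V` with `b j = ζ ^ ((j - M)⁺ / (M + 1)) * S + c / (1 - ζ)`, where `S` bounds `V` on
`[0, M]`. The comparison sequence is antitone, so the maximum of `b` over the window `[k - M, k]`
is `b (k - M)`; one contraction step multiplies the decaying part by `ζ`, i.e. advances its
exponent by `1`, which covers the `M + 1` steps from `k - M` to `k + 1`. Strong induction then
gives `V ≤ b` everywhere.
-/

theorem le_of_windowed_recursion {V b : ℕ → ℝ} {ζ c : ℝ} {M : ℕ} (hζ : 0 ≤ ζ)
    (hb : Antitone b) (hbase : ∀ j ≤ M, V j ≤ b j)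
    (hstep : ∀ k, M ≤ k → ζ * b (k - M) + c ≤ b (k + 1))
    (hrec : ∀ k : ℕ, M ≤ k → V (k + 1) ≤
      ζ * ((Finset.Icc (k - M) k).sup' (Finset.nonempty_Icc.mpr (Nat.sub_le k M)) V) + c) :
    ∀ j, V j ≤ b j := by
  intro j
  induction j using Nat.strong_induction_on with
  | _ j ih =>
    rcases le_or_gt j M with hj | hj
    · exact hbase j hj
    obtain ⟨k, rfl⟩ : ∃ k, j = k + 1 := ⟨j - 1, by omega⟩
    have hwindow : (Finset.Icc (k - M) k).sup' (Finset.nonempty_Icc.mpr (Nat.sub_le k M)) V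
        ≤ b (k - M) := by
      refine Finset.sup'_le _ _ fun θ hθ => ?_
      rw [Finset.mem_Icc] at hθ
      exact (ih θ (by omega)).trans (hb hθ.1)
    calc V (k + 1)
        ≤ ζ * ((Finset.Icc (k - M) k).sup' (Finset.nonempty_Icc.mpr (Nat.sub_le k M)) V) + c :=
          hrec k (by omega)
      _ ≤ ζ * b (k - M) + c := by gcongr
      _ ≤ b (k + 1) := hstep k (by omega)

/-- `j - M` is truncated subtraction, so the decaying part is constant on `[0, M]`. -/
noncomputable def razumikhinBound (ζ S C : ℝ) (M j : ℕ) : ℝ :=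
  ζ ^ (((j - M : ℕ) : ℝ) / (M + 1)) * S + C

section razumikhinBound

variable {ζ S C : ℝ} {M : ℕ}

theorem razumikhinBound_antitone (hζ0 : 0 < ζ) (hζ1 : ζ ≤ 1) (hS : 0 ≤ S) :
    Antitone (razumikhinBound ζ S C M) := by
  intro i j hij
  unfold razumikhinBound
  gcongr ?_ * S + C
  exact Real.rpow_le_rpow_of_exponent_ge hζ0 hζ1 (by gcongr)

theorem razumikhinBound_step (hζ0 : 0 < ζ) (hζ1 : ζ ≤ 1) (hS : 0 ≤ S) {c : ℝ}
    (hC : ζ * C + c ≤ C) (k : ℕ) :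
    ζ * razumikhinBound ζ S C M (k - M) + c ≤ razumikhinBound ζ S C M (k + 1) := by
  unfold razumikhinBound
  set e : ℝ := ((k - M - M : ℕ) : ℝ) / (M + 1)
  have hexp : ((k + 1 - M : ℕ) : ℝ) / (M + 1) ≤ 1 + e := by
    have hM : (0 : ℝ) < M + 1 := by positivity
    rw [div_le_iff₀ hM, add_mul, one_mul, div_mul_cancel₀ _ hM.ne']
    exact_mod_cast (show k + 1 - M ≤ M + 1 + (k - M - M) by omega)
  calc ζ * (ζ ^ e * S + C) + c
      = ζ ^ (1 + e) * S + (ζ * C + c) := by rw [Real.rpow_add hζ0, Real.rpow_one]; ring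
    _ ≤ ζ ^ (((k + 1 - M : ℕ) : ℝ) / (M + 1)) * S + C := by
      gcongr ?_ * S + ?_
      exact Real.rpow_le_rpow_of_exponent_ge hζ0 hζ1 hexp

end razumikhinBound

theorem razumikhin_explicit_bound_from_M (V : ℕ → ℝ) (hVpos : ∀ k, 0 ≤ V k)
    (ζ c : ℝ) (hζ0 : 0 < ζ) (hζ1 : ζ < 1) (hc : 0 ≤ c) (M : ℕ)
    (hrec : ∀ k : ℕ, M ≤ k → V (k + 1) ≤
      ζ * ((Finset.Icc (k - M) k).sup' (Finset.nonempty_Icc.mpr (Nat.sub_le k M)) V) + c) :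
    ∀ k : ℕ, M ≤ k → V (k + 1) ≤
      ζ ^ ((((k : ℝ) - (M : ℝ) + 1)) / ((M : ℝ) + 1)) *
        ((Finset.Icc 0 M).sup' (Finset.nonempty_Icc.mpr (Nat.zero_le M)) V) + c / (1 - ζ) := by
  set S := (Finset.Icc 0 M).sup' (Finset.nonempty_Icc.mpr (Nat.zero_le M)) V
  have hVS : ∀ j ≤ M, V j ≤ S := fun j hj => Finset.le_sup' V (by simp [hj])
  have hS : 0 ≤ S := (hVpos 0).trans (hVS 0 M.zero_le)
  have hC : 0 ≤ c / (1 - ζ) := div_nonneg hc (by linarith)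
  have hfixed : ζ * (c / (1 - ζ)) + c = c / (1 - ζ) := by
    field_simp [(by linarith : (1 - ζ) ≠ 0)]
    ring
  have hV := le_of_windowed_recursion hζ0.le (razumikhinBound_antitone hζ0 hζ1.le hS)
    (fun j hj => by simpa [razumikhinBound, Nat.sub_eq_zero_of_le hj] using le_add_of_le_of_nonneg (hVS j hj) hC)
    (fun k _ => razumikhinBound_step hζ0 hζ1.le hS hfixed.le k) hrec
  intro k hk
  have hcast : ((k + 1 - M : ℕ) : ℝ) = (k : ℝ) - M + 1 := by
    rw [Nat.sub_add_comm hk]; push_cast [hk]; ring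
  simpa [razumikhinBound, hcast] using hV (k + 1)
end
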